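/- arXiv:2006.04492 — 3 statements merged into one kernel-verified Lean document; each statement's English description precedes it below -/
import Mathlib

section
/- Let (Θ, 𝒜) be a measurable space, π a probability measure on Θ, n a natural number, and ℓ : Fin n → Θ → ℝ a family of measurable functions with ℓ k θ > 0 for all k and θ, such that for every k ≤ n the partial product θ ↦ ∏_{j<k} ℓ j θ is integrable with respect to π and Z_k := ∫_Θ ∏_{j<k} ℓ j θ dπ(θ) > 0. Define the sequential Bayesian posteriors μ_k := π.withDensity (θ ↦ (∏_{j<k} ℓ j θ) / Z_k), and assume θ ↦ Real.log (ℓ k θ) is integrable with respect to μ_k for every k < n. Then the log marginal likelihood is bounded below by the sum of expected log predictive likelihoods along the Bayesian updating trajectory: Real.log Z_n ≥ ∑_{k=0}^{n-1} ∫_Θ Real.log (ℓ k θ) dμ_k(θ). Equivalently, with the sum of expected negative log likelihoods S := ∑_{k=0}^{n-1} ∫_Θ (− Real.log (ℓ k θ)) dμ_k(θ), one has Z_n ≥ exp(−S). -/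
open MeasureTheory

/-- Theorem 3.3 (Appendix A): the log marginal likelihood is lower bounded by the sum of
expected log predictive likelihoods along the Bayesian updating trajectory; equivalently,
the marginal likelihood is at least `exp (−S)` where `S` is the sum of expected negative
log likelihoods (the Bayesian training-speed quantity). -/
theorem log_marginal_likelihood_lower_bound
    {Θ : Type*} [MeasurableSpace Θ] (π : Measure Θ) [IsProbabilityMeasure π]
    (n : ℕ) (ℓ : Fin n → Θ → ℝ)
    (hmeas : ∀ k, Measurable (ℓ k))
    (hpos : ∀ k θ, 0 < ℓ k θ)
    (Z : ℕ → ℝ)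
    (hZ : ∀ k ≤ n, Z k =
      ∫ θ, (∏ j ∈ Finset.univ.filter (fun j : Fin n => (j : ℕ) < k), ℓ j θ) ∂π)
    (hint : ∀ k ≤ n, Integrable
      (fun θ => ∏ j ∈ Finset.univ.filter (fun j : Fin n => (j : ℕ) < k), ℓ j θ) π)
    (hZpos : ∀ k ≤ n, 0 < Z k)
    (μ : ℕ → Measure Θ)
    (hμ : ∀ k ≤ n, μ k = π.withDensity (fun θ =>
      ENNReal.ofReal ((∏ j ∈ Finset.univ.filter (fun j : Fin n => (j : ℕ) < k), ℓ j θ) / Z k)))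
    (hlogint : ∀ k : Fin n, Integrable (fun θ => Real.log (ℓ k θ)) (μ k)) :
    (Real.log (Z n) ≥ ∑ k : Fin n, ∫ θ, Real.log (ℓ k θ) ∂(μ k)) ∧
      (Z n ≥ Real.exp (-(∑ k : Fin n, ∫ θ, -Real.log (ℓ k θ) ∂(μ k)))) := by
  set P : ℕ → Θ → ℝ := fun k θ =>
    ∏ j ∈ Finset.univ.filter (fun j : Fin n => (j : ℕ) < k), ℓ j θ with hPdef
  have hPmeas : ∀ k, Measurable (P k) := fun k =>
    Finset.measurable_prod _ fun j _ => hmeas j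
  have hPpos : ∀ k θ, 0 < P k θ := fun k θ => Finset.prod_pos fun j _ => hpos j θ
  have hPsucc : ∀ (k : Fin n) (θ : Θ), P ((k : ℕ) + 1) θ = P (k : ℕ) θ * ℓ k θ := by
    intro k θ
    have hset : (Finset.univ.filter (fun j : Fin n => (j : ℕ) < (k : ℕ) + 1)) =
        insert k (Finset.univ.filter (fun j : Fin n => (j : ℕ) < (k : ℕ))) := by
      ext j
      simp only [Finset.mem_filter, Finset.mem_univ, true_and, Finset.mem_insert,
        Nat.lt_succ_iff_lt_or_eq]
      constructor
      · rintro (h | h)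
        · exact Or.inr h
        · exact Or.inl (Fin.ext h)
      · rintro (h | h)
        · exact Or.inr (by rw [h])
        · exact Or.inl h
    have hk : k ∉ Finset.univ.filter (fun j : Fin n => (j : ℕ) < (k : ℕ)) := by simp
    simp only [hPdef, hset, Finset.prod_insert hk]
    ring
  have hwnn : ∀ k, k ≤ n → ∀ θ, 0 ≤ P k θ / Z k := fun k hk θ =>
    le_of_lt (div_pos (hPpos k θ) (hZpos k hk))
  have hdens : ∀ k, k ≤ n → μ k = π.withDensity
      (fun θ => ((P k θ / Z k).toNNReal : ENNReal)) := by
    intro k hk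
    rw [hμ k hk]; rfl
  have hwmeas : ∀ k, Measurable (fun θ => (P k θ / Z k).toNNReal) := fun k =>
    ((hPmeas k).div measurable_const).real_toNNReal
  have hμint : ∀ k, k ≤ n → ∀ g : Θ → ℝ,
      ∫ θ, g θ ∂(μ k) = ∫ θ, (P k θ / Z k) * g θ ∂π := by
    intro k hk g
    rw [hdens k hk, integral_withDensity_eq_integral_smul (hwmeas k)]
    congr 1
    funext θ
    simp [NNReal.smul_def, Real.coe_toNNReal _ (hwnn k hk θ)]
  have hμintg : ∀ k, k ≤ n → ∀ g : Θ → ℝ,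
      Integrable (fun θ => (P k θ / Z k) * g θ) π → Integrable g (μ k) := by
    intro k hk g hg
    rw [hdens k hk, integrable_withDensity_iff_integrable_smul (hwmeas k)]
    have : (fun θ => (P k θ / Z k).toNNReal • g θ) = fun θ => (P k θ / Z k) * g θ := by
      funext θ
      simp [NNReal.smul_def, Real.coe_toNNReal _ (hwnn k hk θ)]
    rwa [this]
  have hprob : ∀ k, k ≤ n → IsProbabilityMeasure (μ k) := by
    intro k hk
    constructor
    rw [hμ k hk, withDensity_apply _ MeasurableSet.univ, Measure.restrict_univ,
      ← ofReal_integral_eq_lintegral_ofReal ((hint k hk).div_const (Z k))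
        (Filter.Eventually.of_forall (hwnn k hk))]
    rw [integral_div, ← hZ k hk, div_self (hZpos k hk).ne']
    simp
  have key : ∀ k : Fin n, ∫ θ, Real.log (ℓ k θ) ∂(μ k) ≤
      Real.log (Z ((k : ℕ) + 1)) - Real.log (Z (k : ℕ)) := by
    intro k
    have hkn : (k : ℕ) ≤ n := le_of_lt k.isLt
    have hk1 : (k : ℕ) + 1 ≤ n := k.isLt
    haveI := hprob k hkn
    have heq : (fun θ => (P (k : ℕ) θ / Z (k : ℕ)) * ℓ k θ) =
        fun θ => (Z (k : ℕ))⁻¹ • P ((k : ℕ) + 1) θ := by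
      funext θ
      rw [hPsucc k θ]
      simp [div_mul_eq_mul_div, div_eq_inv_mul, mul_comm, smul_eq_mul]
      ring
    have hintl : Integrable (fun θ => ℓ k θ) (μ (k : ℕ)) := by
      apply hμintg _ hkn
      rw [heq]
      exact (hint _ hk1).smul ((Z (k : ℕ))⁻¹)
    have hval : ∫ θ, ℓ k θ ∂(μ (k : ℕ)) = Z ((k : ℕ) + 1) / Z (k : ℕ) := by
      rw [hμint _ hkn, heq, integral_smul, ← hZ _ hk1, smul_eq_mul, div_eq_inv_mul]
    have hexplog : (fun θ => Real.exp (Real.log (ℓ k θ))) = fun θ => ℓ k θ := by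
      funext θ
      exact Real.exp_log (hpos k θ)
    have hjen : Real.exp (∫ θ, Real.log (ℓ k θ) ∂(μ (k : ℕ))) ≤
        ∫ θ, Real.exp (Real.log (ℓ k θ)) ∂(μ (k : ℕ)) :=
      convexOn_exp.map_integral_le Real.continuous_exp.continuousOn isClosed_univ
        (Filter.Eventually.of_forall fun _ => Set.mem_univ _) (hlogint k)
        (by rw [Function.comp_def]; simpa [hexplog] using hintl)
    rw [hexplog, hval] at hjen
    have hdivpos : 0 < Z ((k : ℕ) + 1) / Z (k : ℕ) :=
      div_pos (hZpos _ hk1) (hZpos _ hkn)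
    have := (Real.le_log_iff_exp_le hdivpos).mpr hjen
    rwa [Real.log_div (hZpos _ hk1).ne' (hZpos _ hkn).ne'] at this
  have hZ0 : Z 0 = 1 := by
    rw [hZ 0 (Nat.zero_le n)]
    simp
  have main : ∑ k : Fin n, ∫ θ, Real.log (ℓ k θ) ∂(μ k) ≤ Real.log (Z n) := by
    calc ∑ k : Fin n, ∫ θ, Real.log (ℓ k θ) ∂(μ k)
        ≤ ∑ k : Fin n, (Real.log (Z ((k : ℕ) + 1)) - Real.log (Z (k : ℕ))) :=
          Finset.sum_le_sum fun k _ => key k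
      _ = Real.log (Z n) - Real.log (Z 0) := by
          rw [Fin.sum_univ_eq_sum_range (fun i => Real.log (Z (i + 1)) - Real.log (Z i)) n,
            Finset.sum_range_sub (fun i => Real.log (Z i))]
      _ = Real.log (Z n) := by rw [hZ0, Real.log_one, sub_zero]
  refine ⟨main, ?_⟩
  have hsum : -(∑ k : Fin n, ∫ θ, -Real.log (ℓ k θ) ∂(μ (k : ℕ))) =
      ∑ k : Fin n, ∫ θ, Real.log (ℓ k θ) ∂(μ (k : ℕ)) := by
    rw [← Finset.sum_neg_distrib]
    congr 1
    funext k
    rw [integral_neg, neg_neg]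
  rw [hsum]
  calc Real.exp (∑ k : Fin n, ∫ θ, Real.log (ℓ k θ) ∂(μ (k : ℕ)))
      ≤ Real.exp (Real.log (Z n)) := Real.exp_le_exp.mpr main
    _ = Z n := Real.exp_log (hZpos n le_rfl)
end

section
/- Let (Θ, 𝒜) be a measurable space, π a probability measure on Θ, n ≥ 1 a natural number, and ℓ : Fin n → Θ → ℝ a family of measurable functions with ℓ k θ > 0 for all k and θ, such that for every k ≤ n the partial product θ ↦ ∏_{j<k} ℓ j θ is integrable with respect to π and Z_k := ∫_Θ ∏_{j<k} ℓ j θ dπ(θ) > 0 and θ ↦ Real.log (ℓ k θ) is integrable with respect to the posterior μ_k := π.withDensity (θ ↦ (∏_{j<k} ℓ j θ) / Z_k) for every k < n. Let S := ∑_{k=0}^{n-1} ∫_Θ (− Real.log (ℓ k θ)) dμ_k(θ). Then for any real a, any c ≥ 0 and any δ > 0, a + c · (1 − Real.exp a · (Z_n · δ) ^ (1 / (n : ℝ))) ≤ a + c · (1 − Real.exp a · (Real.exp (−S) · δ) ^ (1 / (n : ℝ))). -/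
open MeasureTheory Finset

/-!
The posterior `μ_k` has density `(∏_{j<k} ℓ_j) / Z_k`, so the predictive likelihood of the
next data point is `∫ ℓ_k dμ_k = Z_{k+1} / Z_k`. Jensen's inequality for the concave `log` gives
`∫ log ℓ_k dμ_k ≤ log Z_{k+1} - log Z_k`, and summing over `k` telescopes (with `Z_0 = 1`) to
`-S ≤ log Z_n`, i.e. `exp (-S) ≤ Z_n`. The PAC-Bayes bound is antitone in the marginal
likelihood, which turns this into the claimed inequality.
-/

section Jensen

variable {α : Type*} [MeasurableSpace α] {ν : Measure α} {f : α → ℝ}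

theorem integral_pos_of_ae_pos [NeZero ν] (hf : Integrable f ν) (hpos : ∀ᵐ x ∂ν, 0 < f x) :
    0 < ∫ x, f x ∂ν := by
  rw [integral_pos_iff_support_of_nonneg_ae (hpos.mono fun _ hx => hx.le) hf, pos_iff_ne_zero]
  intro hzero
  obtain ⟨x, hx_out, hx_pos⟩ := ((measure_eq_zero_iff_ae_notMem.1 hzero).and hpos).exists
  exact hx_out hx_pos.ne'

theorem integral_log_le_log_integral [IsProbabilityMeasure ν] (hf : Integrable f ν)
    (hpos : ∀ᵐ x ∂ν, 0 < f x) (hlog : Integrable (fun x => Real.log (f x)) ν) :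
    ∫ x, Real.log (f x) ∂ν ≤ Real.log (∫ x, f x ∂ν) := by
  set I := ∫ x, f x ∂ν
  have hI : 0 < I := integral_pos_of_ae_pos hf hpos
  have log_le_tangent : ∀ y, 0 < y → Real.log y ≤ y / I + (Real.log I - 1) := fun y hy => by
    have := Real.log_le_sub_one_of_pos (div_pos hy hI)
    rw [Real.log_div hy.ne' hI.ne'] at this
    linarith
  have htangent_int : Integrable (fun x => f x / I + (Real.log I - 1)) ν :=
    (hf.div_const I).add (integrable_const _)
  calc ∫ x, Real.log (f x) ∂ν ≤ ∫ x, (f x / I + (Real.log I - 1)) ∂ν :=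
        integral_mono_ae hlog htangent_int (hpos.mono fun x hx => log_le_tangent _ hx)
    _ = Real.log I := by
        rw [integral_add (hf.div_const I) (integrable_const _), integral_div, integral_const,
          probReal_univ, one_smul, div_self hI.ne']
        ring

end Jensen

namespace MeasureTheory.Measure

variable {α : Type*} [MeasurableSpace α]

noncomputable def withNormalizedDensity (π : Measure α) (p : α → ℝ) : Measure α :=
  π.withDensity fun x => ENNReal.ofReal (p x / ∫ y, p y ∂π)

variable {π : Measure α} {p : α → ℝ}

theorem isProbabilityMeasure_withNormalizedDensity (hp : Integrable p π) (hp0 : 0 ≤ᵐ[π] p)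
    (hZ : 0 < ∫ x, p x ∂π) : IsProbabilityMeasure (π.withNormalizedDensity p) := by
  constructor
  rw [withNormalizedDensity, withDensity_apply _ MeasurableSet.univ, restrict_univ,
    ← ofReal_integral_eq_lintegral_ofReal (hp.div_const _)
      (hp0.mono fun x hx => div_nonneg hx hZ.le),
    integral_div, div_self hZ.ne', ENNReal.ofReal_one]

theorem integral_withNormalizedDensity (hp : AEMeasurable p π) (hp0 : 0 ≤ᵐ[π] p) (g : α → ℝ) :
    ∫ x, g x ∂π.withNormalizedDensity p = (∫ x, p x * g x ∂π) / ∫ x, p x ∂π := by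
  have hZ : 0 ≤ ∫ x, p x ∂π := integral_nonneg_of_ae hp0
  rw [withNormalizedDensity, integral_withDensity_eq_integral_toReal_smul₀
    (hp.div_const _).ennreal_ofReal (ae_of_all _ fun _ => ENNReal.ofReal_lt_top), ← integral_div]
  refine integral_congr_ae ?_
  filter_upwards [hp0] with x hx
  rw [ENNReal.toReal_ofReal (div_nonneg hx hZ), smul_eq_mul, div_mul_eq_mul_div]

theorem integrable_withNormalizedDensity_iff (hp : AEMeasurable p π) (hp0 : 0 ≤ᵐ[π] p)
    (hZ : 0 < ∫ x, p x ∂π) {g : α → ℝ} :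
    Integrable g (π.withNormalizedDensity p) ↔ Integrable (fun x => p x * g x) π := by
  rw [withNormalizedDensity, integrable_withDensity_iff_integrable_smul₀'
    (hp.div_const _).ennreal_ofReal (ae_of_all _ fun _ => ENNReal.ofReal_lt_top),
    ← integrable_mul_const_iff (inv_ne_zero hZ.ne').isUnit fun x => p x * g x]
  refine integrable_congr ?_
  filter_upwards [hp0] with x hx
  rw [ENNReal.toReal_ofReal (div_nonneg hx hZ.le), smul_eq_mul, div_eq_mul_inv]
  ring

theorem integral_log_withNormalizedDensity_le (hp : Integrable p π) (hp0 : 0 ≤ᵐ[π] p)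
    (hZ : 0 < ∫ x, p x ∂π) {ℓ : α → ℝ} (hpℓ : Integrable (fun x => p x * ℓ x) π)
    (hℓ : ∀ᵐ x ∂π, 0 < ℓ x)
    (hlog : Integrable (fun x => Real.log (ℓ x)) (π.withNormalizedDensity p)) :
    ∫ x, Real.log (ℓ x) ∂π.withNormalizedDensity p ≤
      Real.log (∫ x, p x * ℓ x ∂π) - Real.log (∫ x, p x ∂π) := by
  have := isProbabilityMeasure_withNormalizedDensity hp hp0 hZ
  have hℓ_int : Integrable ℓ (π.withNormalizedDensity p) :=
    (integrable_withNormalizedDensity_iff hp.aemeasurable hp0 hZ).2 hpℓ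
  have hℓ_pos : ∀ᵐ x ∂π.withNormalizedDensity p, 0 < ℓ x :=
    withDensity_absolutelyContinuous _ _ |>.ae_le hℓ
  have hjensen := integral_log_le_log_integral hℓ_int hℓ_pos hlog
  have hpred_pos := integral_pos_of_ae_pos hℓ_int hℓ_pos
  rw [integral_withNormalizedDensity hp.aemeasurable hp0 ℓ] at hjensen hpred_pos
  rwa [Real.log_div ((div_pos_iff_of_pos_right hZ).1 hpred_pos).ne' hZ.ne'] at hjensen

end MeasureTheory.Measure

section PartialProducts

variable {α : Type*} {n : ℕ} (ℓ : Fin n → α → ℝ)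

def partialProd (k : ℕ) (x : α) : ℝ :=
  ∏ j ∈ univ.filter (fun j : Fin n => (j : ℕ) < k), ℓ j x

theorem partialProd_zero : partialProd ℓ 0 = 1 := by
  ext x
  simp [partialProd]

theorem partialProd_succ (k : Fin n) (x : α) :
    partialProd ℓ (k + 1) x = partialProd ℓ k x * ℓ k x := by
  have hfilter : univ.filter (fun j : Fin n => (j : ℕ) < k + 1) =
      insert k (univ.filter fun j : Fin n => (j : ℕ) < k) := by
    ext j
    simp only [mem_filter, mem_univ, true_and, mem_insert, Fin.ext_iff]
    omega
  rw [partialProd, hfilter, prod_insert (by simp), mul_comm, partialProd]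

end PartialProducts

theorem antitoneOn_pacBayesBound {a c δ r : ℝ} (hc : 0 ≤ c) (hδ : 0 ≤ δ) (hr : 0 ≤ r) :
    AntitoneOn (fun Z => a + c * (1 - Real.exp a * (Z * δ) ^ r)) (Set.Ici 0) := by
  intro x hx y _ hxy
  dsimp only
  gcongr
  exact mul_nonneg hx hδ

theorem pac_bayes_bound_via_training_speed_general
    {Θ : Type*} [MeasurableSpace Θ] (π : Measure Θ) [IsProbabilityMeasure π]
    (n : ℕ) (ℓ : Fin n → Θ → ℝ)
    (hpos : ∀ k θ, 0 < ℓ k θ)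
    (Z : ℕ → ℝ)
    (hZ : ∀ k ≤ n, Z k =
      ∫ θ, (∏ j ∈ Finset.univ.filter (fun j : Fin n => (j : ℕ) < k), ℓ j θ) ∂π)
    (hint : ∀ k ≤ n, Integrable
      (fun θ => ∏ j ∈ Finset.univ.filter (fun j : Fin n => (j : ℕ) < k), ℓ j θ) π)
    (hZpos : ∀ k ≤ n, 0 < Z k)
    (μ : ℕ → Measure Θ)
    (hμ : ∀ k ≤ n, μ k = π.withDensity (fun θ =>
      ENNReal.ofReal ((∏ j ∈ Finset.univ.filter (fun j : Fin n => (j : ℕ) < k), ℓ j θ) / Z k)))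
    (hlogint : ∀ k : Fin n, Integrable (fun θ => Real.log (ℓ k θ)) (μ k))
    (S : ℝ) (hS : S = ∑ k : Fin n, ∫ θ, -Real.log (ℓ k θ) ∂(μ k))
    (a c δ : ℝ) (hc : 0 ≤ c) (hδ : 0 < δ) :
    a + c * (1 - Real.exp a * (Z n * δ) ^ (1 / (n : ℝ))) ≤
      a + c * (1 - Real.exp a * (Real.exp (-S) * δ) ^ (1 / (n : ℝ))) := by
  have hZ' : ∀ k ≤ n, Z k = ∫ θ, partialProd ℓ k θ ∂π := hZ
  have hμ' : ∀ k ≤ n, μ k = π.withNormalizedDensity (partialProd ℓ k) := fun k hk => by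
    rw [hμ k hk, hZ k hk]
    rfl
  have hstep (k : Fin n) :
      ∫ θ, Real.log (ℓ k θ) ∂μ k ≤ Real.log (Z (k + 1)) - Real.log (Z k) := by
    have hk : (k : ℕ) ≤ n := k.isLt.le
    have hprod_nonneg : 0 ≤ᵐ[π] partialProd ℓ k :=
      ae_of_all _ fun θ => prod_nonneg fun j _ => (hpos j θ).le
    have hnext : Integrable (fun θ => partialProd ℓ k θ * ℓ k θ) π :=
      (hint (k + 1) k.isLt).congr (ae_of_all _ fun θ => partialProd_succ ℓ k θ)
    rw [hμ' k hk, hZ' k hk, hZ' (k + 1) k.isLt]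
    simp only [partialProd_succ]
    exact Measure.integral_log_withNormalizedDensity_le (hint k hk) hprod_nonneg
      (hZ' k hk ▸ hZpos k hk) hnext (ae_of_all _ (hpos k))
      (hμ' k hk ▸ hlogint k)
  have hlogZ : -S ≤ Real.log (Z n) :=
    calc -S = ∑ k : Fin n, ∫ θ, Real.log (ℓ k θ) ∂μ k := by simp [hS, integral_neg]
      _ ≤ ∑ k : Fin n, (Real.log (Z (k + 1)) - Real.log (Z k)) :=
        sum_le_sum fun k _ => hstep k
      _ = Real.log (Z n) - Real.log (Z 0) := by
        rw [Fin.sum_univ_eq_sum_range (fun i => Real.log (Z (i + 1)) - Real.log (Z i)),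
          sum_range_sub (fun i => Real.log (Z i))]
      _ = Real.log (Z n) := by simp [hZ' 0 n.zero_le, partialProd_zero]
  exact antitoneOn_pacBayesBound hc hδ.le (by positivity) (Real.exp_pos _).le
    (hZpos n le_rfl).le ((Real.exp_le_exp.2 hlogZ).trans_eq (Real.exp_log (hZpos n le_rfl)))

/-- Combining Theorem 3.3 with the antitonicity of the PAC-Bayes bound: the PAC-Bayes
bound evaluated at the true marginal likelihood `Z n` is upper-bounded by the estimator
based on the training-speed sum `S`. -/
theorem pac_bayes_bound_via_training_speed
    {Θ : Type*} [MeasurableSpace Θ] (π : Measure Θ) [IsProbabilityMeasure π]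
    (n : ℕ) (hn : 1 ≤ n) (ℓ : Fin n → Θ → ℝ)
    (hmeas : ∀ k, Measurable (ℓ k))
    (hpos : ∀ k θ, 0 < ℓ k θ)
    (Z : ℕ → ℝ)
    (hZ : ∀ k ≤ n, Z k =
      ∫ θ, (∏ j ∈ Finset.univ.filter (fun j : Fin n => (j : ℕ) < k), ℓ j θ) ∂π)
    (hint : ∀ k ≤ n, Integrable
      (fun θ => ∏ j ∈ Finset.univ.filter (fun j : Fin n => (j : ℕ) < k), ℓ j θ) π)
    (hZpos : ∀ k ≤ n, 0 < Z k)
    (μ : ℕ → Measure Θ)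
    (hμ : ∀ k ≤ n, μ k = π.withDensity (fun θ =>
      ENNReal.ofReal ((∏ j ∈ Finset.univ.filter (fun j : Fin n => (j : ℕ) < k), ℓ j θ) / Z k)))
    (hlogint : ∀ k : Fin n, Integrable (fun θ => Real.log (ℓ k θ)) (μ k))
    (S : ℝ) (hS : S = ∑ k : Fin n, ∫ θ, -Real.log (ℓ k θ) ∂(μ k))
    (a c δ : ℝ) (hc : 0 ≤ c) (hδ : 0 < δ) :
    a + c * (1 - Real.exp a * (Z n * δ) ^ (1 / (n : ℝ))) ≤
      a + c * (1 - Real.exp a * (Real.exp (-S) * δ) ^ (1 / (n : ℝ))) :=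
  pac_bayes_bound_via_training_speed_general π n ℓ hpos Z hZ hint hZpos μ hμ hlogint S hS a c δ hc
    hδ
end

section
/- Let Θ and 𝒵 be measurable spaces, D a probability measure on 𝒵 (the data distribution), π a probability measure on Θ (the prior), n ≥ 1 a natural number, δ ∈ (0, 1], and let L : Θ → 𝒵 → ℝ be a jointly measurable loss (negative log likelihood) satisfying a ≤ L θ z ≤ b for all θ, z, where a < b are real numbers. Set c := (b − a) / (1 − Real.exp (a − b)). For a sample s : Fin n → 𝒵, define the marginal likelihood Z(s) := ∫_Θ Real.exp (− ∑_{i} L θ (s i)) dπ(θ) and the Gibbs (Bayesian) posterior ρ_s := π.withDensity (θ ↦ Real.exp (− ∑_i L θ (s i)) / Z(s)). Then, with respect to the n-fold product measure D^n := Measure.pi (fun _ : Fin n => D) on samples s : Fin n → 𝒵, the set of samples s for which ∫_Θ (∫_𝒵 L θ z dD(z)) dρ_s(θ) ≤ a + c · (1 − Real.exp a · (Z(s) · δ) ^ (1 / (n : ℝ))) has D^n-measure at least 1 − δ. -/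
/-!
Let `M θ = ∫ e^{-L θ z} dD(z)` and `V s = ∫ e^{-∑ᵢ L θ (sᵢ)} / (M θ)ⁿ dπ(θ)`. By independence the
integrand has mean `1` under `Dⁿ` for every `θ`, so `∫ V dDⁿ = 1` by Fubini, and Markov gives
`V s < 1/δ` with probability at least `1 - δ`. For such `s`, `V s / Z s = ∫ M⁻ⁿ dρ_s`, and Jensen
for the convex map `x ↦ x⁻ⁿ` yields `(Z s δ)^{1/n} ≤ ∫ M dρ_s`. Convexity of `x ↦ e^{-x}` on
`[a, b]` bounds `M θ` by the chord `e^{-a} - (e^{-a} - e^{-b}) (∫ L θ dD - a) / (b - a)`;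
integrating it against `ρ_s` and solving for the posterior risk gives the bound.
-/

open MeasureTheory Set

theorem ConvexOn.le_chord {s : Set ℝ} {f : ℝ → ℝ} (hf : ConvexOn ℝ s f) {a b x : ℝ}
    (ha : a ∈ s) (hb : b ∈ s) (hx : x ∈ Icc a b) :
    f x ≤ f a + (f b - f a) / (b - a) * (x - a) := by
  rcases hx.1.eq_or_lt with rfl | hax
  · simp
  have hslope := hf.secant_mono ha (hf.1.ordConnected.out ha hb hx) hb hax.ne'
    (hax.trans_le hx.2).ne' hx.2
  rw [div_le_iff₀ (sub_pos.2 hax)] at hslope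
  linarith

section ProbabilityMeasure

variable {α : Type*} [MeasurableSpace α] {μ : Measure α} [IsProbabilityMeasure μ]

theorem integral_le_of_le_affine {f g : α → ℝ} (hf : Integrable f μ) (hg : Integrable g μ)
    {x₀ y₀ m : ℝ} (h : ∀ x, g x ≤ y₀ + m * (f x - x₀)) :
    ∫ x, g x ∂μ ≤ y₀ + m * (∫ x, f x ∂μ - x₀) := by
  have hf' : Integrable (fun x => m * (f x - x₀)) μ :=
    (hf.sub (integrable_const x₀)).const_mul m
  calc ∫ x, g x ∂μ ≤ ∫ x, y₀ + m * (f x - x₀) ∂μ :=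
        integral_mono hg ((integrable_const y₀).add hf') h
    _ = y₀ + m * (∫ x, f x ∂μ - x₀) := by
      rw [integral_add (integrable_const y₀) hf', integral_const_mul,
        integral_sub hf (integrable_const x₀)]
      simp

theorem integral_mem_Icc_of_forall_mem_Icc {f : α → ℝ} (hf : AEMeasurable f μ) {lo hi : ℝ}
    (h : ∀ x, f x ∈ Icc lo hi) : ∫ x, f x ∂μ ∈ Icc lo hi :=
  (convex_Icc lo hi).integral_mem isClosed_Icc (ae_of_all _ h)
    (Integrable.of_mem_Icc lo hi hf (ae_of_all _ h))

theorem inv_integral_pow_le_integral_inv_pow {f : α → ℝ} (hf : AEMeasurable f μ) {lo hi : ℝ}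
    (hlo : 0 < lo) (h : ∀ x, f x ∈ Icc lo hi) (n : ℕ) :
    ((∫ x, f x ∂μ) ^ n)⁻¹ ≤ ∫ x, (f x ^ n)⁻¹ ∂μ := by
  have hconv : ConvexOn ℝ (Ici lo) fun y : ℝ => (y ^ n)⁻¹ := by
    simpa [zpow_neg] using
      (convexOn_zpow (𝕜 := ℝ) (-n)).subset (Ici_subset_Ioi.2 hlo) (convex_Ici lo)
  have hinv : ∀ x, (f x ^ n)⁻¹ ∈ Icc (hi ^ n)⁻¹ (lo ^ n)⁻¹ := fun x =>
    ⟨inv_anti₀ (pow_pos (hlo.trans_le (h x).1) n)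
        (pow_le_pow_left₀ (hlo.le.trans (h x).1) (h x).2 n),
      inv_anti₀ (pow_pos hlo n) (pow_le_pow_left₀ hlo.le (h x).1 n)⟩
  exact hconv.map_integral_le
    ((continuousOn_pow n).inv₀ fun y hy => pow_ne_zero n (hlo.trans_le hy).ne') isClosed_Ici
    (ae_of_all _ fun x => (h x).1) (Integrable.of_mem_Icc lo hi hf (ae_of_all _ h))
    (Integrable.of_mem_Icc _ _ (hf.pow_const n).inv (ae_of_all _ hinv))

theorem ofReal_one_sub_le_measure_lt_inv {V : α → ℝ} (hV : 0 ≤ V) (hVi : Integrable V μ)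
    (hV1 : ∫ x, V x ∂μ ≤ 1) {δ : ℝ} (hδ : 0 < δ) :
    ENNReal.ofReal (1 - δ) ≤ μ {x | V x < δ⁻¹} := by
  have hmarkov : μ {x | δ⁻¹ ≤ V x} ≤ ENNReal.ofReal δ := by
    rw [← ofReal_measureReal]
    refine ENNReal.ofReal_le_ofReal ?_
    have := (mul_meas_ge_le_integral_of_nonneg (ae_of_all _ hV) hVi δ⁻¹).trans hV1
    rwa [inv_mul_le_iff₀ hδ, mul_one] at this
  have hcover : 1 ≤ μ {x | V x < δ⁻¹} + μ {x | δ⁻¹ ≤ V x} := by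
    rw [← measure_univ (μ := μ)]
    refine (measure_mono fun x _ => ?_).trans (measure_union_le _ _)
    exact (lt_or_ge (V x) δ⁻¹).imp id id
  calc ENNReal.ofReal (1 - δ) = 1 - ENNReal.ofReal δ := by
        rw [ENNReal.ofReal_sub _ hδ.le, ENNReal.ofReal_one]
    _ ≤ 1 - μ {x | δ⁻¹ ≤ V x} := tsub_le_tsub_left hmarkov 1
    _ ≤ μ {x | V x < δ⁻¹} := tsub_le_iff_right.2 hcover

end ProbabilityMeasure

theorem integral_exp_neg_sum_pi {ι E : Type*} [Fintype ι] [MeasurableSpace E] {μ : Measure E}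
    [SigmaFinite μ] (f : E → ℝ) :
    ∫ x : ι → E, Real.exp (-∑ i, f (x i)) ∂Measure.pi (fun _ => μ) =
      (∫ y, Real.exp (-f y) ∂μ) ^ Fintype.card ι := by
  simp_rw [← Finset.sum_neg_distrib, Real.exp_sum]
  exact integral_fintype_prod_eq_pow (μ := μ) fun y => Real.exp (-f y)

theorem exp_neg_mem_Icc {a b x : ℝ} (hx : x ∈ Icc a b) :
    Real.exp (-x) ∈ Icc (Real.exp (-b)) (Real.exp (-a)) :=
  ⟨Real.exp_le_exp.2 (neg_le_neg hx.2), Real.exp_le_exp.2 (neg_le_neg hx.1)⟩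

theorem exp_neg_le_chord {a b x : ℝ} (hx : x ∈ Icc a b) :
    Real.exp (-x) ≤ Real.exp (-a) + (Real.exp (-b) - Real.exp (-a)) / (b - a) * (x - a) :=
  (convexOn_exp.comp_linearMap (-LinearMap.id)).le_chord (mem_univ a) (mem_univ b) hx

theorem le_of_le_exp_neg_chord {a b x E : ℝ} (hab : a < b)
    (h : x ≤ Real.exp (-a) + (Real.exp (-b) - Real.exp (-a)) / (b - a) * (E - a)) :
    E ≤ a + (b - a) / (1 - Real.exp (a - b)) * (1 - Real.exp a * x) := by
  have hd : 0 < b - a := sub_pos.2 hab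
  have he : 0 < 1 - Real.exp (a - b) := sub_pos.2 (Real.exp_lt_one_iff.2 (by linarith))
  have hb : Real.exp (-b) = Real.exp (-a) * Real.exp (a - b) := by
    rw [← Real.exp_add]; ring_nf
  have ha : Real.exp a * Real.exp (-a) = 1 := by rw [← Real.exp_add]; simp
  rw [← sub_le_iff_le_add', div_mul_eq_mul_div, le_div_iff₀ hd] at h
  rw [div_mul_eq_mul_div, ← sub_le_iff_le_add', le_div_iff₀ he]
  have := mul_le_mul_of_nonneg_left h (Real.exp_pos a).le
  rw [hb] at this
  linear_combination this + (b - a + (E - a) * (Real.exp (a - b) - 1)) * ha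

section Normalized

variable {α : Type*} [MeasurableSpace α] {μ : Measure α} {g : α → ℝ}

theorem isProbabilityMeasure_withDensity_div_integral (hg0 : 0 ≤ g) (hgi : Integrable g μ)
    (hZ : ∫ x, g x ∂μ ≠ 0) :
    IsProbabilityMeasure (μ.withDensity fun x => ENNReal.ofReal (g x / ∫ y, g y ∂μ)) := by
  constructor
  rw [withDensity_apply _ MeasurableSet.univ, Measure.restrict_univ,
    ← ofReal_integral_eq_lintegral_ofReal (hgi.div_const _)
      (ae_of_all _ fun x => div_nonneg (hg0 x) (integral_nonneg hg0)),
    integral_div, div_self hZ, ENNReal.ofReal_one]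

theorem integral_withDensity_div_integral (hg : Measurable g) (hg0 : 0 ≤ g) (h : α → ℝ) :
    ∫ x, h x ∂μ.withDensity (fun x => ENNReal.ofReal (g x / ∫ y, g y ∂μ)) =
      (∫ x, g x * h x ∂μ) / ∫ x, g x ∂μ := by
  rw [integral_withDensity_eq_integral_toReal_smul (hg.div_const _).ennreal_ofReal
    (ae_of_all _ fun _ => ENNReal.ofReal_lt_top), ← integral_div]
  refine integral_congr_ae (ae_of_all _ fun x => ?_)
  dsimp only
  rw [ENNReal.toReal_ofReal (div_nonneg (hg0 x) (integral_nonneg hg0)), smul_eq_mul]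
  ring

end Normalized

namespace PacBayes

variable {Θ 𝒵 : Type*} {n : ℕ} {L : Θ → 𝒵 → ℝ} {a b : ℝ}

noncomputable def likelihood (L : Θ → 𝒵 → ℝ) (s : Fin n → 𝒵) (θ : Θ) : ℝ :=
  Real.exp (-∑ i, L θ (s i))

theorem likelihood_mem_Icc (hLb : ∀ θ z, L θ z ∈ Icc a b) (s : Fin n → 𝒵) (θ : Θ) :
    likelihood L s θ ∈ Icc (Real.exp (-(n * b))) (Real.exp (-(n * a))) := by
  refine exp_neg_mem_Icc ⟨?_, ?_⟩
  · simpa using Finset.sum_le_sum fun i (_ : i ∈ Finset.univ) => (hLb θ (s i)).1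
  · simpa using Finset.sum_le_sum fun i (_ : i ∈ Finset.univ) => (hLb θ (s i)).2

variable [MeasurableSpace 𝒵] {D : Measure 𝒵}

noncomputable def expNegLossMean (D : Measure 𝒵) (L : Θ → 𝒵 → ℝ) (θ : Θ) : ℝ :=
  ∫ z, Real.exp (-L θ z) ∂D

theorem integral_likelihood_pi [SigmaFinite D] (θ : Θ) :
    ∫ s, likelihood L s θ ∂Measure.pi (fun _ : Fin n => D) = expNegLossMean D L θ ^ n := by
  simpa [likelihood, expNegLossMean] using integral_exp_neg_sum_pi (ι := Fin n) (μ := D) (L θ)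

variable [MeasurableSpace Θ] {π : Measure Θ}

noncomputable def marginalLikelihood (π : Measure Θ) (L : Θ → 𝒵 → ℝ) (s : Fin n → 𝒵) : ℝ :=
  ∫ θ, likelihood L s θ ∂π

noncomputable def gibbsPosterior (π : Measure Θ) (L : Θ → 𝒵 → ℝ) (s : Fin n → 𝒵) :
    Measure Θ :=
  π.withDensity fun θ => ENNReal.ofReal (likelihood L s θ / marginalLikelihood π L s)

noncomputable def likelihoodRatio (D : Measure 𝒵) (L : Θ → 𝒵 → ℝ) (s : Fin n → 𝒵) (θ : Θ) :
    ℝ :=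
  likelihood L s θ / expNegLossMean D L θ ^ n

theorem measurable_likelihood (hL : Measurable (Function.uncurry L)) :
    Measurable fun p : (Fin n → 𝒵) × Θ => likelihood L p.1 p.2 :=
  (Finset.measurable_sum _ fun i _ =>
    hL.comp (measurable_snd.prodMk ((measurable_pi_apply i).comp measurable_fst))).neg.exp

theorem measurable_likelihood_apply (hL : Measurable (Function.uncurry L)) (s : Fin n → 𝒵) :
    Measurable (likelihood L s) :=
  (measurable_likelihood hL).comp measurable_prodMk_left

theorem marginalLikelihood_pos [IsProbabilityMeasure π] (hL : Measurable (Function.uncurry L))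
    (hLb : ∀ θ z, L θ z ∈ Icc a b) (s : Fin n → 𝒵) : 0 < marginalLikelihood π L s :=
  (Real.exp_pos _).trans_le (integral_mem_Icc_of_forall_mem_Icc
    (measurable_likelihood_apply hL s).aemeasurable
    (likelihood_mem_Icc hLb s)).1

theorem measurable_expNegLossMean [SFinite D] (hL : Measurable (Function.uncurry L)) :
    Measurable (expNegLossMean D L) :=
  (hL.neg.exp.stronglyMeasurable.integral_prod_right' (ν := D)).measurable

theorem expNegLossMean_mem_Icc [IsProbabilityMeasure D] (hL : Measurable (Function.uncurry L))
    (hLb : ∀ θ z, L θ z ∈ Icc a b) (θ : Θ) :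
    expNegLossMean D L θ ∈ Icc (Real.exp (-b)) (Real.exp (-a)) :=
  integral_mem_Icc_of_forall_mem_Icc hL.of_uncurry_left.neg.exp.aemeasurable
    fun z => exp_neg_mem_Icc (hLb θ z)

theorem expNegLossMean_le_chord [IsProbabilityMeasure D] (hL : Measurable (Function.uncurry L))
    (hLb : ∀ θ z, L θ z ∈ Icc a b) (θ : Θ) :
    expNegLossMean D L θ ≤
      Real.exp (-a) + (Real.exp (-b) - Real.exp (-a)) / (b - a) * (∫ z, L θ z ∂D - a) :=
  integral_le_of_le_affine
    (Integrable.of_mem_Icc a b hL.of_uncurry_left.aemeasurable (ae_of_all _ (hLb θ)))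
    (Integrable.of_mem_Icc _ _ hL.of_uncurry_left.neg.exp.aemeasurable
      (ae_of_all _ fun z => exp_neg_mem_Icc (hLb θ z)))
    fun z => exp_neg_le_chord (hLb θ z)

theorem likelihoodRatio_mem_Icc [IsProbabilityMeasure D] (hL : Measurable (Function.uncurry L))
    (hLb : ∀ θ z, L θ z ∈ Icc a b) (s : Fin n → 𝒵) (θ : Θ) :
    likelihoodRatio D L s θ ∈ Icc 0 (Real.exp (-(n * a)) / Real.exp (-b) ^ n) := by
  have hM := (expNegLossMean_mem_Icc (D := D) hL hLb θ).1
  have hℓ := likelihood_mem_Icc hLb s θ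
  exact ⟨div_nonneg (Real.exp_pos _).le (pow_nonneg ((Real.exp_pos _).le.trans hM) n),
    div_le_div₀ (Real.exp_pos _).le hℓ.2 (pow_pos (Real.exp_pos _) n)
      (pow_le_pow_left₀ (Real.exp_pos _).le hM n)⟩

theorem measurable_likelihoodRatio [SFinite D] (hL : Measurable (Function.uncurry L)) :
    Measurable fun p : (Fin n → 𝒵) × Θ => likelihoodRatio D L p.1 p.2 :=
  (measurable_likelihood hL).div
    (((measurable_expNegLossMean hL).comp measurable_snd).pow_const n)

theorem integral_likelihoodRatio_pi [IsProbabilityMeasure D]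
    (hL : Measurable (Function.uncurry L)) (hLb : ∀ θ z, L θ z ∈ Icc a b) (θ : Θ) :
    ∫ s, likelihoodRatio D L s θ ∂Measure.pi (fun _ : Fin n => D) = 1 := by
  have hM := (Real.exp_pos _).trans_le (expNegLossMean_mem_Icc (D := D) hL hLb θ).1
  simp_rw [likelihoodRatio]
  rw [integral_div, integral_likelihood_pi, div_self (pow_pos hM n).ne']

theorem integrable_likelihoodRatio_prod [IsProbabilityMeasure D] [IsProbabilityMeasure π]
    (hL : Measurable (Function.uncurry L)) (hLb : ∀ θ z, L θ z ∈ Icc a b) :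
    Integrable (Function.uncurry (likelihoodRatio D L))
      ((Measure.pi fun _ : Fin n => D).prod π) :=
  Integrable.of_mem_Icc _ _ (measurable_likelihoodRatio hL).aemeasurable
    (ae_of_all _ fun p => likelihoodRatio_mem_Icc hL hLb p.1 p.2)

theorem integral_integral_likelihoodRatio [IsProbabilityMeasure D] [IsProbabilityMeasure π]
    (hL : Measurable (Function.uncurry L)) (hLb : ∀ θ z, L θ z ∈ Icc a b) :
    ∫ s, ∫ θ, likelihoodRatio D L s θ ∂π ∂Measure.pi (fun _ : Fin n => D) = 1 := by
  rw [integral_integral_swap (integrable_likelihoodRatio_prod hL hLb)]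
  simp [integral_likelihoodRatio_pi hL hLb]

theorem isProbabilityMeasure_gibbsPosterior [IsProbabilityMeasure π]
    (hL : Measurable (Function.uncurry L)) (hLb : ∀ θ z, L θ z ∈ Icc a b) (s : Fin n → 𝒵) :
    IsProbabilityMeasure (gibbsPosterior π L s) :=
  isProbabilityMeasure_withDensity_div_integral (fun _ => (Real.exp_pos _).le)
    (Integrable.of_mem_Icc _ _ (measurable_likelihood_apply hL s).aemeasurable
      (ae_of_all _ (likelihood_mem_Icc hLb s)))
    (marginalLikelihood_pos hL hLb s).ne'

theorem integral_inv_pow_expNegLossMean_gibbsPosterior (hL : Measurable (Function.uncurry L))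
    (s : Fin n → 𝒵) :
    ∫ θ, (expNegLossMean D L θ ^ n)⁻¹ ∂gibbsPosterior π L s =
      (∫ θ, likelihoodRatio D L s θ ∂π) / marginalLikelihood π L s := by
  simp_rw [likelihoodRatio, div_eq_mul_inv]
  rw [gibbsPosterior, marginalLikelihood, integral_withDensity_div_integral
    (measurable_likelihood_apply hL s) fun θ => (Real.exp_pos _).le, div_eq_mul_inv]

theorem rpow_le_integral_expNegLossMean_gibbsPosterior [IsProbabilityMeasure D]
    [IsProbabilityMeasure π] (hL : Measurable (Function.uncurry L))
    (hLb : ∀ θ z, L θ z ∈ Icc a b) (hn : n ≠ 0) {δ : ℝ} (hδ : 0 < δ) {s : Fin n → 𝒵}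
    (hs : ∫ θ, likelihoodRatio D L s θ ∂π ≤ δ⁻¹) :
    (marginalLikelihood π L s * δ) ^ (1 / (n : ℝ)) ≤
      ∫ θ, expNegLossMean D L θ ∂gibbsPosterior π L s := by
  have := isProbabilityMeasure_gibbsPosterior (π := π) hL hLb s
  have hZ := marginalLikelihood_pos (π := π) hL hLb s
  have hM := measurable_expNegLossMean (D := D) hL
  have hMρ := (Real.exp_pos _).trans_le
    (integral_mem_Icc_of_forall_mem_Icc (μ := gibbsPosterior π L s) hM.aemeasurable
      (expNegLossMean_mem_Icc hL hLb)).1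
  have hpow : marginalLikelihood π L s * δ ≤
      (∫ θ, expNegLossMean D L θ ∂gibbsPosterior π L s) ^ n := by
    rw [← inv_le_inv₀ (pow_pos hMρ n) (mul_pos hZ hδ)]
    calc ((∫ θ, expNegLossMean D L θ ∂gibbsPosterior π L s) ^ n)⁻¹
        ≤ ∫ θ, (expNegLossMean D L θ ^ n)⁻¹ ∂gibbsPosterior π L s :=
          inv_integral_pow_le_integral_inv_pow hM.aemeasurable (Real.exp_pos (-b))
            (expNegLossMean_mem_Icc hL hLb) n
      _ = (∫ θ, likelihoodRatio D L s θ ∂π) / marginalLikelihood π L s :=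
          integral_inv_pow_expNegLossMean_gibbsPosterior hL s
      _ ≤ δ⁻¹ / marginalLikelihood π L s := div_le_div_of_nonneg_right hs hZ.le
      _ = (marginalLikelihood π L s * δ)⁻¹ := by rw [mul_inv, div_eq_mul_inv, mul_comm]
  calc (marginalLikelihood π L s * δ) ^ (1 / (n : ℝ))
      ≤ ((∫ θ, expNegLossMean D L θ ∂gibbsPosterior π L s) ^ n) ^ (1 / (n : ℝ)) :=
        Real.rpow_le_rpow (mul_pos hZ hδ).le hpow (by positivity)
    _ = ∫ θ, expNegLossMean D L θ ∂gibbsPosterior π L s := by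
        rw [one_div, Real.pow_rpow_inv_natCast hMρ.le hn]

theorem integral_integral_gibbsPosterior_le [IsProbabilityMeasure D] [IsProbabilityMeasure π]
    (hab : a < b) (hL : Measurable (Function.uncurry L)) (hLb : ∀ θ z, L θ z ∈ Icc a b)
    (hn : n ≠ 0) {δ : ℝ} (hδ : 0 < δ) {s : Fin n → 𝒵}
    (hs : ∫ θ, likelihoodRatio D L s θ ∂π ≤ δ⁻¹) :
    ∫ θ, ∫ z, L θ z ∂D ∂gibbsPosterior π L s ≤
      a + (b - a) / (1 - Real.exp (a - b)) *
        (1 - Real.exp a * (marginalLikelihood π L s * δ) ^ (1 / (n : ℝ))) := by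
  have := isProbabilityMeasure_gibbsPosterior (π := π) hL hLb s
  refine le_of_le_exp_neg_chord hab
    ((rpow_le_integral_expNegLossMean_gibbsPosterior hL hLb hn hδ hs).trans
      (integral_le_of_le_affine ?_ ?_ (expNegLossMean_le_chord hL hLb)))
  · exact Integrable.of_mem_Icc a b
      (hL.stronglyMeasurable.integral_prod_right' (ν := D)).measurable.aemeasurable
      (ae_of_all _ fun θ =>
        integral_mem_Icc_of_forall_mem_Icc hL.of_uncurry_left.aemeasurable (hLb θ))
  · exact Integrable.of_mem_Icc _ _ (measurable_expNegLossMean hL).aemeasurable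
      (ae_of_all _ (expNegLossMean_mem_Icc hL hLb))

end PacBayes

theorem pac_bayes_germain_corollary2_general
    {Θ 𝒵 : Type*} [MeasurableSpace Θ] [MeasurableSpace 𝒵]
    (D : Measure 𝒵) [IsProbabilityMeasure D]
    (π : Measure Θ) [IsProbabilityMeasure π]
    (n : ℕ) (hn : 1 ≤ n) (δ : ℝ) (hδ : 0 < δ)
    (a b : ℝ) (hab : a < b)
    (L : Θ → 𝒵 → ℝ) (hLmeas : Measurable (Function.uncurry L))
    (hLbound : ∀ θ z, a ≤ L θ z ∧ L θ z ≤ b)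
    (c : ℝ) (hc : c = (b - a) / (1 - Real.exp (a - b)))
    (Z : (Fin n → 𝒵) → ℝ)
    (hZ : ∀ s, Z s = ∫ θ, Real.exp (-∑ i, L θ (s i)) ∂π)
    (ρ : (Fin n → 𝒵) → Measure Θ)
    (hρ : ∀ s, ρ s = π.withDensity (fun θ =>
      ENNReal.ofReal (Real.exp (-∑ i, L θ (s i)) / Z s))) :
    ENNReal.ofReal (1 - δ) ≤
      (Measure.pi (fun _ : Fin n => D))
        {s | ∫ θ, (∫ z, L θ z ∂D) ∂(ρ s) ≤
          a + c * (1 - Real.exp a * (Z s * δ) ^ (1 / (n : ℝ)))} := by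
  obtain rfl : Z = PacBayes.marginalLikelihood π L := funext hZ
  obtain rfl : ρ = PacBayes.gibbsPosterior π L := funext hρ
  subst hc
  have hV := PacBayes.integrable_likelihoodRatio_prod (D := D) (π := π) (n := n) hLmeas hLbound
  refine (ofReal_one_sub_le_measure_lt_inv
    (fun s => integral_nonneg fun θ => (PacBayes.likelihoodRatio_mem_Icc hLmeas hLbound s θ).1)
    hV.integral_prod_left
    (PacBayes.integral_integral_likelihoodRatio hLmeas hLbound).le hδ).trans
    (measure_mono fun s hs => ?_)
  exact PacBayes.integral_integral_gibbsPosterior_le hab hLmeas hLbound (by omega) hδ hs.le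

/-- Corollary 2 of Germain et al. (PAC-Bayes bound, Appendix A): for a bounded negative
log likelihood loss `L` with values in `[a, b]`, with probability at least `1 − δ` over
an i.i.d. sample of size `n` from the data distribution `D`, the expected population
loss under the Gibbs (Bayesian) posterior `ρ s` is bounded by
`a + c (1 − e^a (Z(s) δ)^{1/n})`, where `Z(s)` is the marginal likelihood and
`c = (b − a)/(1 − e^{a−b})`. -/
theorem pac_bayes_germain_corollary2
    {Θ 𝒵 : Type*} [MeasurableSpace Θ] [MeasurableSpace 𝒵]
    (D : Measure 𝒵) [IsProbabilityMeasure D]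
    (π : Measure Θ) [IsProbabilityMeasure π]
    (n : ℕ) (hn : 1 ≤ n) (δ : ℝ) (hδ : 0 < δ) (hδ1 : δ ≤ 1)
    (a b : ℝ) (hab : a < b)
    (L : Θ → 𝒵 → ℝ) (hLmeas : Measurable (Function.uncurry L))
    (hLbound : ∀ θ z, a ≤ L θ z ∧ L θ z ≤ b)
    (c : ℝ) (hc : c = (b - a) / (1 - Real.exp (a - b)))
    (Z : (Fin n → 𝒵) → ℝ)
    (hZ : ∀ s, Z s = ∫ θ, Real.exp (-∑ i, L θ (s i)) ∂π)
    (ρ : (Fin n → 𝒵) → Measure Θ)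
    (hρ : ∀ s, ρ s = π.withDensity (fun θ =>
      ENNReal.ofReal (Real.exp (-∑ i, L θ (s i)) / Z s))) :
    ENNReal.ofReal (1 - δ) ≤
      (Measure.pi (fun _ : Fin n => D))
        {s | ∫ θ, (∫ z, L θ z ∂D) ∂(ρ s) ≤
          a + c * (1 - Real.exp a * (Z s * δ) ^ (1 / (n : ℝ)))} :=
  pac_bayes_germain_corollary2_general D π n hn δ hδ a b hab L hLmeas hLbound c hc Z hZ ρ hρ
end
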